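/- arXiv:1305.6552 — 3 statements merged into one kernel-verified Lean document; each statement's English description precedes it below -/
import Mathlib

section
/- For every real k with 2 < k < 4 and every x > 0, sin(k · arctan(1/x)) < k·x/(1+x²). -/
/-!
With `θ = arctan (1 / x) ∈ (0, π / 2)` we have `sin (2θ) = 2x / (1 + x²)`, so the claim reads
`sin (c t) < c sin t` for `c = k / 2 ∈ (1, 2)` and `t = 2θ ∈ (0, π)`. If `c t ≤ π`, this is strict
concavity of `sin` on `[0, π]`: the secant slope `sin s / s` decreases in `s`. Otherwise
`π < c t < 2π`, so `sin (c t) ≤ 0 < c sin t`.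
-/

open Real

theorem Real.sin_two_mul_arctan (y : ℝ) : sin (2 * arctan y) = 2 * y / (1 + y ^ 2) := by
  have hs : √(1 + y ^ 2) ^ 2 = 1 + y ^ 2 := sq_sqrt (by positivity)
  rw [sin_two_mul, sin_arctan, cos_arctan]
  field_simp
  rw [hs]

theorem Real.sin_mul_lt_mul_sin_of_mul_le_pi {c t : ℝ} (hc : 1 < c) (ht : 0 < t)
    (hct : c * t ≤ π) : sin (c * t) < c * sin t := by
  have ht_lt : t < c * t := lt_mul_left ht hc
  have hslope := strictConcaveOn_sin_Icc.secant_strict_mono (a := 0) ⟨le_rfl, pi_pos.le⟩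
    ⟨ht.le, ht_lt.le.trans hct⟩ ⟨(ht.trans ht_lt).le, hct⟩ ht.ne' (ht.trans ht_lt).ne' ht_lt
  simp only [sin_zero, sub_zero] at hslope
  rw [div_lt_div_iff₀ (ht.trans ht_lt) ht] at hslope
  nlinarith

theorem Real.sin_mul_lt_mul_sin {c t : ℝ} (hc1 : 1 < c) (hc2 : c ≤ 2) (ht0 : 0 < t)
    (htπ : t < π) : sin (c * t) < c * sin t := by
  rcases le_or_gt (c * t) π with hct | hct
  · exact sin_mul_lt_mul_sin_of_mul_le_pi hc1 ht0 hct
  · have hsin_t : 0 < c * sin t := mul_pos (by linarith) (sin_pos_of_pos_of_lt_pi ht0 htπ)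
    have hsin_ct : sin (c * t) ≤ 0 := by
      rw [← sin_sub_two_pi]
      exact sin_nonpos_of_nonpos_of_neg_pi_le (by nlinarith) (by linarith)
    linarith

theorem stmt_0 (k x : ℝ) (hk2 : 2 < k) (hk4 : k < 4) (hx : 0 < x) :
    Real.sin (k * Real.arctan (1 / x)) < k * x / (1 + x ^ 2) := by
  set θ := arctan (1 / x)
  have hθ0 : 0 < θ := arctan_pos.2 (by positivity)
  have hθπ : θ < π / 2 := arctan_lt_pi_div_two _
  have hsin : sin (2 * θ) = 2 * x / (1 + x ^ 2) := by
    rw [sin_two_mul_arctan]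
    field_simp
    ring
  have key := sin_mul_lt_mul_sin (c := k / 2) (t := 2 * θ) (by linarith) (by linarith)
    (by linarith) (by linarith)
  rw [hsin] at key
  calc sin (k * θ) = sin (k / 2 * (2 * θ)) := by ring_nf
    _ < k / 2 * (2 * x / (1 + x ^ 2)) := key
    _ = k * x / (1 + x ^ 2) := by ring
end

section
/- For every s with 1/√3 < s < 1/tan(π/8), the function l(s) := 12s² - (4/3)(1+s²)³·arctan³(1/s) is strictly positive. -/
lemma arctan_tangent_le {a t : ℝ} (ha : 0 < a) (ht : 0 < t) :
    Real.arctan t ≤ Real.arctan a + (t - a) / (1 + a ^ 2) := by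
  rcases lt_trichotomy t a with h | h | h
  · obtain ⟨c, hc, hc'⟩ := exists_hasDerivAt_eq_slope Real.arctan (fun x => 1 / (1 + x ^ 2)) h
      (Real.continuous_arctan.continuousOn) (fun x _ => Real.hasDerivAt_arctan x)
    have hc1 : 0 < c := lt_trans ht hc.1
    have hc2 : c < a := hc.2
    have h1 : (0:ℝ) < 1 + c ^ 2 := by positivity
    have h2 : (0:ℝ) < 1 + a ^ 2 := by positivity
    have hD : 0 < Real.arctan a - Real.arctan t := by
      have := Real.arctan_strictMono h; linarith
    rw [div_eq_div_iff h1.ne' (sub_pos.mpr h).ne'] at hc'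
    have key : a - t ≤ (Real.arctan a - Real.arctan t) * (1 + a ^ 2) := by
      nlinarith [mul_le_mul_of_nonneg_left (show 1 + c ^ 2 ≤ 1 + a ^ 2 by nlinarith) hD.le]
    have : (a - t) / (1 + a ^ 2) ≤ Real.arctan a - Real.arctan t := (div_le_iff₀ h2).mpr key
    have e : (t - a) / (1 + a ^ 2) = -((a - t) / (1 + a ^ 2)) := by ring
    linarith [e.le, e.ge]
  · simp [h]
  · obtain ⟨c, hc, hc'⟩ := exists_hasDerivAt_eq_slope Real.arctan (fun x => 1 / (1 + x ^ 2)) h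
      (Real.continuous_arctan.continuousOn) (fun x _ => Real.hasDerivAt_arctan x)
    have hc1 : a < c := hc.1
    have h1 : (0:ℝ) < 1 + c ^ 2 := by positivity
    have h2 : (0:ℝ) < 1 + a ^ 2 := by positivity
    have hD : 0 < Real.arctan t - Real.arctan a := by
      have := Real.arctan_strictMono h; linarith
    rw [div_eq_div_iff h1.ne' (sub_pos.mpr h).ne'] at hc'
    have key : (Real.arctan t - Real.arctan a) * (1 + a ^ 2) ≤ t - a := by
      nlinarith [mul_le_mul_of_nonneg_left (show 1 + a ^ 2 ≤ 1 + c ^ 2 by nlinarith) hD.le]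
    have : Real.arctan t - Real.arctan a ≤ (t - a) / (1 + a ^ 2) := (le_div_iff₀ h2).mpr key
    linarith

lemma qA3 {t : ℝ} (h1 : 2/5 ≤ t) (h2 : t ≤ 1) :
    (0.0054 + 1.28*t + 0.2854*t^2) ^ 3 < 9 * t ^ 4 := by
  nlinarith [sq_nonneg (t - 2/5), sq_nonneg (t-1), mul_nonneg (sub_nonneg.mpr h1) (sub_nonneg.mpr h2), mul_nonneg (mul_nonneg (sub_nonneg.mpr h1) (sub_nonneg.mpr h2)) (sq_nonneg t), mul_nonneg (mul_nonneg (sub_nonneg.mpr h1) (sub_nonneg.mpr h2)) (sq_nonneg (t-0.7)), mul_nonneg (mul_nonneg (sub_nonneg.mpr h1) (sub_nonneg.mpr h2)) (mul_nonneg (sub_nonneg.mpr h1) (sub_nonneg.mpr h2))]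

lemma qB3 {t : ℝ} (h1 : 1 ≤ t) (h2 : t ≤ 1.7321) :
    (0.6142 + 0.25*t + 0.6142*t^2 + 0.25*(5.73227041*t - 4.73227041)) ^ 3 < 9 * t ^ 4 := by
  nlinarith [sq_nonneg (t - 1), sq_nonneg (t-1.7321), mul_nonneg (sub_nonneg.mpr h1) (sub_nonneg.mpr h2), mul_nonneg (mul_nonneg (sub_nonneg.mpr h1) (sub_nonneg.mpr h2)) (sq_nonneg t), mul_nonneg (mul_nonneg (sub_nonneg.mpr h1) (sub_nonneg.mpr h2)) (sq_nonneg (t-1.4)), mul_nonneg (mul_nonneg (sub_nonneg.mpr h1) (sub_nonneg.mpr h2)) (mul_nonneg (sub_nonneg.mpr h1) (sub_nonneg.mpr h2))]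

lemma key_ineq {t : ℝ} (hlb : 2/5 ≤ t) (hub : t < Real.sqrt 3) :
    (1 + t ^ 2) ^ 3 * (Real.arctan t) ^ 3 < 9 * t ^ 4 := by
  have ht0 : 0 < t := by linarith
  have hs3 : Real.sqrt 3 ^ 2 = 3 := Real.sq_sqrt (by norm_num)
  have hs3n : 0 ≤ Real.sqrt 3 := Real.sqrt_nonneg 3
  have hs3u : Real.sqrt 3 < 1.7321 := by nlinarith
  have hs3l : 1.7320 < Real.sqrt 3 := by nlinarith
  have hA0 : 0 < Real.arctan t := by
    have := Real.arctan_strictMono ht0; simpa [Real.arctan_zero] using this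
  have hpi : Real.pi < 3.1416 := by linarith [Real.pi_lt_d6]
  have h1t : (0:ℝ) < 1 + t ^ 2 := by positivity
  rcases le_or_gt t 1 with hc | hc
  · -- tangent at a = 1
    have htan := arctan_tangent_le (a := 1) (t := t) one_pos ht0
    rw [Real.arctan_one] at htan
    have hAle : Real.arctan t ≤ 0.2854 + t/2 := by
      have : (t - 1) / (1 + 1 ^ 2) = (t-1)/2 := by norm_num
      rw [this] at htan; linarith
    have hchord : t^3 ≤ 1.56*t - 0.56 := by nlinarith [mul_nonneg (mul_nonneg (sub_nonneg.mpr hlb) (sub_nonneg.mpr hc)) (show (0:ℝ) ≤ t + 1.4 by linarith)]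
    have hu : (1 + t^2) * Real.arctan t ≤ 0.0054 + 1.28*t + 0.2854*t^2 := by
      have h2 : (1 + t^2) * Real.arctan t ≤ (1 + t^2) * (0.2854 + t/2) :=
        mul_le_mul_of_nonneg_left hAle h1t.le
      nlinarith
    have hun : 0 ≤ (1 + t^2) * Real.arctan t := by positivity
    calc (1 + t ^ 2) ^ 3 * (Real.arctan t) ^ 3 = ((1 + t^2) * Real.arctan t)^3 := by ring
      _ ≤ (0.0054 + 1.28*t + 0.2854*t^2)^3 := pow_le_pow_left₀ hun hu 3
      _ < 9 * t ^ 4 := qA3 hlb hc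
  · -- tangent at a = √3
    have hs3p : 0 < Real.sqrt 3 := by linarith
    have htan := arctan_tangent_le (a := Real.sqrt 3) (t := t) hs3p ht0
    have harc3 : Real.arctan (Real.sqrt 3) = Real.pi / 3 := by
      rw [← Real.tan_pi_div_three, Real.arctan_tan] <;> linarith [Real.pi_pos]
    rw [harc3, hs3] at htan
    have hAle : Real.arctan t ≤ 0.6142 + t/4 := by
      have e : (t - Real.sqrt 3) / (1 + 3) = (t - Real.sqrt 3)/4 := by norm_num
      rw [e] at htan
      nlinarith
    have hchord : t^3 ≤ 5.73227041*t - 4.73227041 := by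
      nlinarith [mul_nonneg (mul_nonneg (sub_nonneg.mpr hc.le) (show (0:ℝ) ≤ 1.7321 - t by linarith)) (show (0:ℝ) ≤ t + 2.7321 by linarith)]
    have hu : (1 + t^2) * Real.arctan t ≤ 0.6142 + 0.25*t + 0.6142*t^2 + 0.25*(5.73227041*t - 4.73227041) := by
      have h2 : (1 + t^2) * Real.arctan t ≤ (1 + t^2) * (0.6142 + t/4) :=
        mul_le_mul_of_nonneg_left hAle h1t.le
      nlinarith
    have hun : 0 ≤ (1 + t^2) * Real.arctan t := by positivity
    calc (1 + t ^ 2) ^ 3 * (Real.arctan t) ^ 3 = ((1 + t^2) * Real.arctan t)^3 := by ring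
      _ ≤ (0.6142 + 0.25*t + 0.6142*t^2 + 0.25*(5.73227041*t - 4.73227041))^3 := pow_le_pow_left₀ hun hu 3
      _ < 9 * t ^ 4 := qB3 hc.le (by linarith)

theorem stmt_15 (s : ℝ) (h1 : 1 / Real.sqrt 3 < s) (h2 : s < 1 / Real.tan (Real.pi / 8)) :
    0 < 12 * s ^ 2 - (4 / 3) * (1 + s ^ 2) ^ 3 * (Real.arctan (1 / s)) ^ 3 := by
  have hs3 : Real.sqrt 3 ^ 2 = 3 := Real.sq_sqrt (by norm_num)
  have hs3n : 0 ≤ Real.sqrt 3 := Real.sqrt_nonneg 3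
  have hs3p : 0 < Real.sqrt 3 := by nlinarith
  have hs0 : 0 < s := lt_trans (by positivity) h1
  set t : ℝ := 1 / s with htdef
  have ht0 : 0 < t := by positivity
  -- upper bound : t < √3
  have ht3 : t < Real.sqrt 3 := by
    have := one_div_lt_one_div_of_lt (by positivity : (0:ℝ) < 1 / Real.sqrt 3) h1
    rwa [one_div_one_div] at this
  -- lower bound : tan (π/8) < t, and tan (π/8) > 2/5
  have hpi := Real.pi_pos
  have htanpos : 0 < Real.tan (Real.pi / 8) :=
    Real.tan_pos_of_pos_of_lt_pi_div_two (by linarith) (by linarith)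
  have httan : Real.tan (Real.pi / 8) < t := by
    have := one_div_lt_one_div_of_lt hs0 h2
    rwa [one_div_one_div] at this
  have h25 : (2/5 : ℝ) < Real.tan (Real.pi / 8) := by
    have hs2 : Real.sqrt 2 ^ 2 = 2 := Real.sq_sqrt (by norm_num)
    have hs2n : 0 ≤ Real.sqrt 2 := Real.sqrt_nonneg 2
    have hs2u : Real.sqrt 2 < 1.415 := by nlinarith
    have ha2 : Real.sqrt (2 - Real.sqrt 2) ^ 2 = 2 - Real.sqrt 2 :=
      Real.sq_sqrt (by nlinarith)
    have hb2 : Real.sqrt (2 + Real.sqrt 2) ^ 2 = 2 + Real.sqrt 2 :=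
      Real.sq_sqrt (by nlinarith)
    have ha0 : 0 ≤ Real.sqrt (2 - Real.sqrt 2) := Real.sqrt_nonneg _
    have hb0 : 0 < Real.sqrt (2 + Real.sqrt 2) := Real.sqrt_pos.mpr (by nlinarith)
    rw [Real.tan_eq_sin_div_cos, Real.sin_pi_div_eight, Real.cos_pi_div_eight]
    rw [div_lt_div_iff₀ (by norm_num) (by positivity)]
    have hsq : (2 * (Real.sqrt (2 + Real.sqrt 2) / 2)) ^ 2 < (5 * (Real.sqrt (2 - Real.sqrt 2) / 2)) ^ 2 := by
      nlinarith
    have := lt_of_pow_lt_pow_left₀ 2 (by positivity) hsq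
    linarith
  have hlb : (2/5 : ℝ) ≤ t := by linarith
  have key := key_ineq hlb ht3
  -- transfer to s
  have hid1 : (1 + t ^ 2) ^ 3 * (Real.arctan t) ^ 3 * s ^ 6 = (1 + s ^ 2) ^ 3 * (Real.arctan t) ^ 3 := by
    rw [htdef]; field_simp; ring
  have hid2 : 9 * t ^ 4 * s ^ 6 = 9 * s ^ 2 := by
    rw [htdef]; field_simp
  have hkey2 : (1 + s ^ 2) ^ 3 * (Real.arctan t) ^ 3 < 9 * s ^ 2 := by
    have := mul_lt_mul_of_pos_right key (by positivity : (0:ℝ) < s ^ 6)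
    rwa [hid1, hid2] at this
  linarith
end

section
/- For every s with 1/√3 < s < 1/tan(3π/20), one has s²(19 - s²) - (1+s²)³·arctan²(1/s) > 0. -/
/-!
Put `u = s²`. For `s ≤ 1` the bound `arctan (1/s) < π/3 < 21/20`, and for `s ≥ 1` the bound
`arctan (1/s) < 1/s`, reduce the claim to a polynomial inequality in `u` on `(1/3, 1]`,
resp. `[1, 25/4)`. The upper end comes from `s < cot (3π/20) < 5/2`, since `tan x > x` on
`(0, π/2)`.
-/

open Real

lemma two_fifths_lt_tan_three_pi_div_twenty : (2 / 5 : ℝ) < tan (3 * π / 20) := by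
  have hπ : 3.14 < π := pi_gt_d2
  calc (2 / 5 : ℝ) < 3 * π / 20 := by linarith
    _ < tan (3 * π / 20) := lt_tan (by positivity) (by linarith)

lemma arctan_lt_self {x : ℝ} (hx : 0 < x) : arctan x < x := by
  have h := lt_tan (arctan_pos.mpr hx) (arctan_lt_pi_div_two x)
  rwa [tan_arctan] at h

lemma arctan_lt_pi_div_three {x : ℝ} (hx : x < √3) : arctan x < π / 3 := by
  rw [← arctan_sqrt_three]
  exact arctan_strictMono hx

lemma cube_mul_lt_of_mem_Ioc {u : ℝ} (hu₀ : 1 / 3 < u) (hu₁ : u ≤ 1) :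
    (1 + u) ^ 3 * (441 / 400) < u * (19 - u) := by
  nlinarith [mul_nonneg (mul_nonneg (sub_nonneg.mpr hu₀.le) (sub_nonneg.mpr hu₁))
    (sub_nonneg.mpr hu₁)]

lemma cube_lt_of_mem_Ico {u : ℝ} (hu₀ : 1 ≤ u) (hu₁ : u < 25 / 4) :
    (1 + u) ^ 3 < u ^ 2 * (19 - u) := by
  nlinarith [mul_nonneg (mul_nonneg (sub_nonneg.mpr hu₀) (sub_nonneg.mpr hu₁.le))
    (sub_nonneg.mpr hu₀)]

lemma pos_of_inv_sqrt_three_lt_of_le_one {s : ℝ} (hs₀ : 1 / √3 < s) (hs₁ : s ≤ 1) :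
    0 < s ^ 2 * (19 - s ^ 2) - (1 + s ^ 2) ^ 3 * arctan (1 / s) ^ 2 := by
  have hs : 0 < s := lt_trans (by positivity) hs₀
  have hsq : 1 / 3 < s ^ 2 := by
    have h := pow_lt_pow_left₀ hs₀ (by positivity) two_ne_zero
    rwa [div_pow, sq_sqrt (by norm_num : (0 : ℝ) ≤ 3), one_pow] at h
  have hπ : π < 3.15 := pi_lt_d2
  have hat₀ : 0 < arctan (1 / s) := arctan_pos.mpr (by positivity)
  have hat₁ : arctan (1 / s) < 21 / 20 := by
    have h : 1 / s < √3 := by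
      rw [div_lt_iff₀ hs, mul_comm, ← div_lt_iff₀ (by positivity)]
      exact hs₀
    linarith [arctan_lt_pi_div_three h]
  have hat : arctan (1 / s) ^ 2 < 441 / 400 := by nlinarith
  have hpoly := cube_mul_lt_of_mem_Ioc hsq (by nlinarith)
  nlinarith [mul_lt_mul_of_pos_left hat (by positivity : (0 : ℝ) < (1 + s ^ 2) ^ 3)]

lemma pos_of_one_le_of_lt_five_halves {s : ℝ} (hs₀ : 1 ≤ s) (hs₁ : s < 5 / 2) :
    0 < s ^ 2 * (19 - s ^ 2) - (1 + s ^ 2) ^ 3 * arctan (1 / s) ^ 2 := by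
  have hs : 0 < s := by linarith
  have hat : arctan (1 / s) ^ 2 < 1 / s ^ 2 := by
    rw [← one_div_pow]
    exact pow_lt_pow_left₀ (arctan_lt_self (by positivity))
      (arctan_pos.mpr (by positivity)).le two_ne_zero
  have hpoly : (1 + s ^ 2) ^ 3 * (1 / s ^ 2) < s ^ 2 * (19 - s ^ 2) := by
    rw [mul_one_div, div_lt_iff₀ (by positivity), mul_right_comm, ← sq]
    exact cube_lt_of_mem_Ico (by nlinarith) (by nlinarith)
  nlinarith [mul_lt_mul_of_pos_left hat (by positivity : (0 : ℝ) < (1 + s ^ 2) ^ 3)]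

theorem stmt_16 (s : ℝ) (h1 : 1 / Real.sqrt 3 < s)
    (h2 : s < 1 / Real.tan (3 * Real.pi / 20)) :
    0 < s ^ 2 * (19 - s ^ 2) - (1 + s ^ 2) ^ 3 * (Real.arctan (1 / s)) ^ 2 := by
  rcases le_total s 1 with hs | hs
  · exact pos_of_inv_sqrt_three_lt_of_le_one h1 hs
  · have hcot : 1 / tan (3 * π / 20) < 5 / 2 := by
      rw [div_lt_iff₀ (by linarith [two_fifths_lt_tan_three_pi_div_twenty])]
      linarith [two_fifths_lt_tan_three_pi_div_twenty]
    exact pos_of_one_le_of_lt_five_halves hs (h2.trans hcot)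
end
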